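/- arXiv:0811.2090 — 2 statements merged into one kernel-verified Lean document; each statement's English description precedes it below -/
import Mathlib

section
/- Let T be a Hausdorff tree, α a limit ordinal of cofinality κ, and H ⊆ T_α a simple set. Then for every cofinal sequence (α_ξ)_{ξ<κ} in α there exists a regressive map π : H → ⋃_{ξ<κ} T_{α_ξ} with the property that for all x, y ∈ H, if the intervals [π(x), x] = {z ∈ T : π(x) ≤ z ≤ x} and [π(y), y] have nonempty intersection, then x = y. -/
open Set

/-- A partial order is a tree order if the set of strict predecessors of
each element is well-ordered. -/
def IsTreeOrder (T : Type) [PartialOrder T] : Prop :=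
  ∀ x : T, IsWellOrder {y : T // y < x} (fun a b => (a : T) < (b : T))

/-- The height of an element of a tree: the order type of its set of strict
predecessors. -/
noncomputable def treeHt {T : Type} [PartialOrder T] (hT : IsTreeOrder T) (x : T) : Ordinal :=
  @Ordinal.type {y : T // y < x} (fun a b => (a : T) < (b : T)) (hT x)

/-- The level of a tree of order `α`. -/
def treeLevel {T : Type} [PartialOrder T] (hT : IsTreeOrder T) (α : Ordinal) : Set T :=
  {x : T | treeHt hT x = α}

/-- `f` is a cofinal sequence in the limit ordinal `α`: it is a strictly increasing
`cf α`-indexed sequence of ordinals below `α` whose supremum is `α`. -/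
def IsCofinalSeq (α : Ordinal) (f : Ordinal → Ordinal) : Prop :=
  (∀ ξ η : Ordinal, ξ < η → η < α.cof.ord → f ξ < f η) ∧
  (∀ ξ : Ordinal, ξ < α.cof.ord → f ξ < α) ∧
  (∀ β : Ordinal, β < α → ∃ ξ : Ordinal, ξ < α.cof.ord ∧ β ≤ f ξ)

/-- A subset `H` of the level `T_α` (`α` a limit ordinal) is simple if for some
cofinal sequence `(α_ξ)_{ξ < cf α}` in `α` there is an injective regressive map
from `H` into `⋃_{ξ < cf α} T_{α_ξ}`. -/
def TreeSimple {T : Type} [PartialOrder T] (hT : IsTreeOrder T) (α : Ordinal)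
    (H : Set T) : Prop :=
  ∃ f : Ordinal → Ordinal, IsCofinalSeq α f ∧
    ∃ π : T → T, Set.InjOn π H ∧
      ∀ x ∈ H, π x < x ∧ ∃ ξ : Ordinal, ξ < α.cof.ord ∧ treeHt hT (π x) = f ξ

/-- A tree is Hausdorff if every nonempty totally ordered subset has at most one
minimal upper bound. -/
def IsHausdorffTree (T : Type) [PartialOrder T] : Prop :=
  ∀ A : Set T, A.Nonempty → IsChain (· ≤ ·) A → ∀ u v : T,
    u ∈ upperBounds A → (∀ w ∈ upperBounds A, ¬ w < u) →
    v ∈ upperBounds A → (∀ w ∈ upperBounds A, ¬ w < v) → u = v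

/-- The interval topology on a tree, generated by the sets `(x, z]` and `(0, z]`. -/
def intervalTopology (T : Type) [PartialOrder T] : TopologicalSpace T :=
  TopologicalSpace.generateFrom
    ({s : Set T | ∃ x z : T, s = Set.Ioc x z} ∪ {s : Set T | ∃ z : T, s = Set.Iic z})

/-! Fix an injective regressive `σ` witnessing that `H` is simple, with values on levels
`g ζ`. For `x ∈ H`, fewer than `cf α` elements `y ∈ H` have `σ y` below `x` and lower than
`σ x`: such a `σ y` is the predecessor of `x` at height `g ζ` for some `ζ` below a fixed
index, and `σ` is injective. Since `T` is Hausdorff, two distinct elements of `T_α` have no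
common predecessors above some height below `α`; the supremum of these fewer than `cf α`
heights is still below `α`, so `π x` can be taken on the branch below `x` at a height `f ξ`
above all of them and above `σ x`. If `[π x, x]` and `[π y, y]` met at `z` with `x ≠ y` and,
say, `σ y` lower than `σ x` (equal heights would force `σ x = σ y`), then `σ y ≤ z < x`, so
`y` is among the elements counted for `x`, and `z ≥ π x` is a common predecessor of `x` and
`y` above the height where they split. -/

lemma IsCofinalSeq.strictMonoOn {α : Ordinal} {f : Ordinal → Ordinal} (hf : IsCofinalSeq α f) :
    StrictMonoOn f (Iio α.cof.ord) :=
  fun _ _ _ hη hξη => hf.1 _ _ hξη hη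

namespace IsTreeOrder

variable {T : Type} [PartialOrder T] (hT : IsTreeOrder T)

lemma treeHt_eq_typein {u x : T} (h : u < x) :
    treeHt hT u =
      @Ordinal.typein {y : T // y < x} (fun a b => (a : T) < (b : T)) (hT x) ⟨u, h⟩ := by
  let := hT x
  let := hT u
  rw [← Ordinal.type_subrel]
  exact Ordinal.type_eq.2 ⟨⟨⟨fun w => ⟨⟨w.1, w.2.trans h⟩, w.2⟩,
    fun b => ⟨b.1.1, b.2⟩, fun _ => rfl, fun _ => rfl⟩, Iff.rfl⟩⟩

lemma treeHt_lt_treeHt {u x : T} (h : u < x) : treeHt hT u < treeHt hT x := by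
  let := hT x
  rw [hT.treeHt_eq_typein h]
  exact Ordinal.typein_lt_type _ _

lemma treeHt_le_treeHt {u x : T} (h : u ≤ x) : treeHt hT u ≤ treeHt hT x := by
  rcases h.lt_or_eq with h | rfl
  exacts [(hT.treeHt_lt_treeHt h).le, le_rfl]

lemma treeHt_injOn_Iio (x : T) : InjOn (treeHt hT) (Iio x) := by
  let := hT x
  intro u hu v hv h
  rw [hT.treeHt_eq_typein hu, hT.treeHt_eq_typein hv] at h
  exact congrArg Subtype.val (Ordinal.typein_injective _ h)

lemma le_of_treeHt_le {u v x : T} (hu : u < x) (hv : v < x)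
    (h : treeHt hT u ≤ treeHt hT v) : u ≤ v := by
  let := hT x
  rcases trichotomous (r := fun a b : {y : T // y < x} => (a : T) < (b : T))
    ⟨u, hu⟩ ⟨v, hv⟩ with h' | h' | h'
  · exact le_of_lt h'
  · exact le_of_eq (congrArg Subtype.val h')
  · exact absurd (hT.treeHt_lt_treeHt h') h.not_gt

lemma exists_lt_treeHt_eq {x : T} {β : Ordinal} (h : β < treeHt hT x) :
    ∃ u < x, treeHt hT u = β := by
  let := hT x
  let u := Ordinal.enum (fun a b : {y : T // y < x} => (a : T) < (b : T)) ⟨β, h⟩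
  exact ⟨u, u.2, (hT.treeHt_eq_typein u.2).trans (Ordinal.typein_enum _ h)⟩

lemma isChain_Iio (hT : IsTreeOrder T) (x : T) : IsChain (· ≤ ·) (Iio x) := by
  intro u hu v hv _
  rcases le_total (treeHt hT u) (treeHt hT v) with h | h
  exacts [Or.inl (hT.le_of_treeHt_le hu hv h), Or.inr (hT.le_of_treeHt_le hv hu h)]

lemma not_lt_of_mem_upperBounds_Iio {x w : T} (hx : Order.IsSuccLimit (treeHt hT x))
    (hw : w ∈ upperBounds (Iio x)) : ¬ w < x := by
  intro hwx
  obtain ⟨v, hvx, hv⟩ := hT.exists_lt_treeHt_eq (hx.succ_lt (hT.treeHt_lt_treeHt hwx))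
  have := hT.treeHt_le_treeHt (hw hvx)
  rw [hv] at this
  exact (Order.lt_succ _).not_ge this

lemma eq_of_Iio_eq (hHaus : IsHausdorffTree T) {x y : T}
    (hx : Order.IsSuccLimit (treeHt hT x)) (h : Iio x = Iio y) : x = y := by
  obtain ⟨u, hu, -⟩ := hT.exists_lt_treeHt_eq hx.bot_lt
  refine hHaus (Iio x) ⟨u, hu⟩ (hT.isChain_Iio x) x y (fun _ => le_of_lt)
    (fun w hw => hT.not_lt_of_mem_upperBounds_Iio hx hw) ?_ ?_
  · rw [h]; exact fun _ => le_of_lt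
  · intro w hw hwy
    exact hT.not_lt_of_mem_upperBounds_Iio hx hw (by rwa [← mem_Iio, h])

lemma exists_treeHt_bound_of_ne (hHaus : IsHausdorffTree T) {x y : T}
    (hx : Order.IsSuccLimit (treeHt hT x)) (hxy : treeHt hT x = treeHt hT y) (hne : x ≠ y) :
    ∃ β < treeHt hT x, ∀ z, z < x → z < y → treeHt hT z < β := by
  by_contra! hcommon
  refine hne (hT.eq_of_Iio_eq hHaus hx (Set.ext fun u => ⟨fun hu => ?_, fun hu => ?_⟩))
  · obtain ⟨z, hzx, hzy, hz⟩ := hcommon _ (hT.treeHt_lt_treeHt hu)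
    exact (hT.le_of_treeHt_le hu hzx hz).trans_lt hzy
  · obtain ⟨z, hzx, hzy, hz⟩ := hcommon _ (hxy ▸ hT.treeHt_lt_treeHt hu)
    exact (hT.le_of_treeHt_le hu hzy hz).trans_lt hzx

lemma lt_of_le_of_le_of_treeHt_eq {x y z : T} (hzx : z ≤ x) (hzy : z ≤ y) (hne : x ≠ y)
    (hxy : treeHt hT x = treeHt hT y) : z < x := by
  refine hzx.lt_of_ne ?_
  rintro rfl
  exact (hT.treeHt_lt_treeHt (hzy.lt_of_ne hne)).ne hxy

variable {α : Ordinal} {H : Set T} {σ : T → T} {g : Ordinal → Ordinal}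

lemma mk_lt_cof_of_injOn (hg : IsCofinalSeq α g) (hσinj : InjOn σ H)
    (hσ : ∀ y ∈ H, ∃ ξ < α.cof.ord, treeHt hT (σ y) = g ξ) (x : T) {γ : Ordinal}
    (hγ : γ < α) :
    Cardinal.mk {y | y ∈ H ∧ σ y < x ∧ treeHt hT (σ y) < γ} < α.cof := by
  obtain ⟨ζ, hζ, hγζ⟩ := hg.2.2 γ hγ
  choose! idx hidx hσidx using hσ
  let e : {y | y ∈ H ∧ σ y < x ∧ treeHt hT (σ y) < γ} → Iio ζ := fun y =>
    ⟨idx y, (hg.strictMonoOn.lt_iff_lt (hidx y y.2.1) hζ).1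
      ((hσidx y y.2.1).symm.trans_lt (y.2.2.2.trans_le hγζ))⟩
  have he : Function.Injective e := by
    intro ⟨y, hy, hyx, _⟩ ⟨y', hy', hy'x, _⟩ hee
    have hyy' : idx y = idx y' := congrArg Subtype.val hee
    refine Subtype.ext (hσinj hy hy' (hT.treeHt_injOn_Iio x hyx hy'x ?_))
    rw [hσidx y hy, hσidx y' hy', hyy']
  have hmk := Cardinal.lift_mk_le_lift_mk_of_injective he
  rw [Cardinal.mk_Iio_ordinal, Cardinal.lift_lift] at hmk
  exact Cardinal.lift_lt.{0, 1}.1 (hmk.trans_lt (Cardinal.lift_lt.2 (Cardinal.lt_ord.1 hζ)))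

lemma exists_regressive_separating (hHaus : IsHausdorffTree T) (hα : Order.IsSuccLimit α)
    (hH : H ⊆ treeLevel hT α) (hg : IsCofinalSeq α g) (hσinj : InjOn σ H)
    (hσ : ∀ y ∈ H, σ y < y ∧ ∃ ξ < α.cof.ord, treeHt hT (σ y) = g ξ)
    {f : Ordinal → Ordinal} (hf : IsCofinalSeq α f) {x : T} (hx : x ∈ H) :
    ∃ p < x, (∃ ξ < α.cof.ord, treeHt hT p = f ξ) ∧ σ x ≤ p ∧
      ∀ y ∈ H, σ y < x → treeHt hT (σ y) < treeHt hT (σ x) →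
        ∀ z, z < x → z < y → treeHt hT z < treeHt hT p := by
  have hxα : treeHt hT x = α := hH hx
  have hγ : treeHt hT (σ x) < α := hxα ▸ hT.treeHt_lt_treeHt (hσ x hx).1
  have hbound : ∀ y : {y | y ∈ H ∧ σ y < x ∧ treeHt hT (σ y) < treeHt hT (σ x)},
      ∃ β < α, ∀ z, z < x → z < y → treeHt hT z < β := by
    rintro ⟨y, hy, -, hyσ⟩
    have hne : x ≠ y := by rintro rfl; exact hyσ.false
    exact hxα ▸ hT.exists_treeHt_bound_of_ne hHaus (hxα ▸ hα) (hxα.trans (hH hy).symm) hne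
  choose β hβα hβ using hbound
  have hsup : ⨆ y, β y < α := Ordinal.iSup_lt_of_lt_cof
    (hT.mk_lt_cof_of_injOn hg hσinj (fun y hy => (hσ y hy).2) x hγ) hβα
  obtain ⟨ξ, hξ, hle⟩ := hf.2.2 _ (max_lt hγ hsup)
  obtain ⟨p, hpx, hp⟩ := hT.exists_lt_treeHt_eq (hxα ▸ hf.2.1 ξ hξ)
  refine ⟨p, hpx, ⟨ξ, hξ, hp⟩,
    hT.le_of_treeHt_le (hσ x hx).1 hpx (hp ▸ le_of_max_le_left hle), ?_⟩
  intro y hy hyx hyσ z hzx hzy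
  calc treeHt hT z < β ⟨y, hy, hyx, hyσ⟩ := hβ _ z hzx hzy
    _ ≤ ⨆ y, β y := Ordinal.le_iSup β _
    _ ≤ f ξ := le_of_max_le_right hle
    _ = treeHt hT p := hp.symm

end IsTreeOrder

/-- If `H ⊆ T_α` is simple, then for every cofinal sequence `(α_ξ)_{ξ<κ}` in `α` there is a
regressive map `π : H → ⋃_{ξ<κ} T_{α_ξ}` such that the intervals `[π(x), x]`, `x ∈ H`, are
pairwise disjoint. -/
theorem stmt_9 {T : Type} [PartialOrder T] (hT : IsTreeOrder T) (hHaus : IsHausdorffTree T)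
    (α : Ordinal) (hα : Order.IsSuccLimit α) (H : Set T) (hH : H ⊆ treeLevel hT α)
    (hsimple : TreeSimple hT α H)
    (f : Ordinal → Ordinal) (hf : IsCofinalSeq α f) :
    ∃ π : T → T, (∀ x ∈ H, π x < x) ∧
      (∀ x ∈ H, ∃ ξ : Ordinal, ξ < α.cof.ord ∧ treeHt hT (π x) = f ξ) ∧
      (∀ x ∈ H, ∀ y ∈ H, (Set.Icc (π x) x ∩ Set.Icc (π y) y).Nonempty → x = y) := by
  obtain ⟨g, hg, σ, hσinj, hσ⟩ := hsimple
  choose! π hπx hπf hσπ hπsep using fun x (hx : x ∈ H) =>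
    hT.exists_regressive_separating hHaus hα hH hg hσinj hσ hf hx
  refine ⟨π, hπx, hπf, ?_⟩
  rintro x hx y hy ⟨z, ⟨hxz, hzx⟩, hyz, hzy⟩
  by_contra hne
  have hxy : treeHt hT x = treeHt hT y := (hH hx).trans (hH hy).symm
  have hzx' : z < x := hT.lt_of_le_of_le_of_treeHt_eq hzx hzy hne hxy
  have hzy' : z < y := hT.lt_of_le_of_le_of_treeHt_eq hzy hzx (Ne.symm hne) hxy.symm
  have hσxz : σ x ≤ z := (hσπ x hx).trans hxz
  have hσyz : σ y ≤ z := (hσπ y hy).trans hyz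
  rcases lt_trichotomy (treeHt hT (σ x)) (treeHt hT (σ y)) with h | h | h
  · exact (hπsep y hy x hx (hσxz.trans_lt hzy') h z hzy' hzx').not_ge (hT.treeHt_le_treeHt hyz)
  · exact hne (hσinj hx hy
      (hT.treeHt_injOn_Iio x (hσxz.trans_lt hzx') (hσyz.trans_lt hzx') h))
  · exact (hπsep x hx y hy (hσyz.trans_lt hzx') h z hzx' hzy').not_ge (hT.treeHt_le_treeHt hxz)
end

section
/- Let T be an admissible partition tree of a compact linearly ordered space K. If a, b ∈ T and a ∩ b contains at least two points, then a and b are comparable in the tree order of T (i.e., a ⊆ b or b ⊆ a). -/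
open Set

/-- `T`, together with the interpretation map `I` assigning to each element of `T` a
subset of `K`, is an admissible partition tree of the compact linearly ordered space `K`. -/
structure IsAdmissiblePartitionTree (K : Type) [LinearOrder K] [TopologicalSpace K]
    (T : Type) [PartialOrder T] (I : T → Set K) : Prop where
  /-- The order on `T` is a tree order. -/
  tree : IsTreeOrder T
  /-- The tree order is reverse inclusion of the associated intervals. -/
  le_iff : ∀ a b : T, a ≤ b ↔ I b ⊆ I a
  /-- Every member is a closed subset of `K`. -/
  closed : ∀ a : T, IsClosed (I a)
  /-- Every member is an interval of `K`. -/
  interval : ∀ a : T, (I a).OrdConnected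
  /-- Every member is non-trivial, i.e. has at least two points. -/
  nontrivial : ∀ a : T, ∃ x y : K, x ∈ I a ∧ y ∈ I a ∧ x ≠ y
  /-- The zeroth level consists precisely of (the element representing) `K` itself. -/
  root : ∀ a : T, treeHt tree a = 0 ↔ I a = Set.univ
  /-- The zeroth level is nonempty. -/
  root_exists : ∃ a : T, I a = Set.univ
  /-- Two-element members have no immediate successors. -/
  two_elt : ∀ a : T, (∃ x y : K, x ≠ y ∧ I a = {x, y}) → ¬ ∃ b : T, a ⋖ b
  /-- A member with at least three elements has exactly two immediate successors,
  splitting it at an interior point. -/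
  three_elt : ∀ a : T,
    (∃ x y z : K, x ≠ y ∧ y ≠ z ∧ x ≠ z ∧ x ∈ I a ∧ y ∈ I a ∧ z ∈ I a) →
    ∃ b c : T, a ⋖ b ∧ a ⋖ c ∧ b ≠ c ∧ (∀ d : T, a ⋖ d → d = b ∨ d = c) ∧
      ∃ x y z : K, x < y ∧ y < z ∧
        IsLeast (I a) x ∧ IsLeast (I b) x ∧ IsGreatest (I b) y ∧
        IsLeast (I c) y ∧ IsGreatest (I c) z ∧ IsGreatest (I a) z
  /-- For limit `α`, the members of level `α` are exactly the intersections of members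
  chosen from each earlier level. -/
  limit_level : ∀ α : Ordinal, Order.IsSuccLimit α → ∀ a : T,
    (treeHt tree a = α ↔ ∃ g : Ordinal → T, (∀ ξ : Ordinal, ξ < α → treeHt tree (g ξ) = ξ) ∧
      I a = ⋂ ξ ∈ Set.Iio α, I (g ξ))

/-! Two members of the same level that share two points are equal, by induction on the level:
at a successor level both have the same parent, whose two children meet in a single point;
at a limit level both are intersections of the same chain below. A member of lower level is
then compared with the ancestor of the other at its own level. -/

section TreeOrder

variable {T : Type} [PartialOrder T] (hT : IsTreeOrder T)

theorem treeHt_eq_typein {b c : T} (h : c < b) :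
    treeHt hT c =
      @Ordinal.typein {y : T // y < b} (fun a b => (a : T) < (b : T)) (hT b) ⟨c, h⟩ := by
  have := hT b
  have := hT c
  rw [← Ordinal.type_subrel]
  exact Ordinal.type_eq.mpr ⟨⟨⟨fun y => ⟨⟨y.1, y.2.trans h⟩, y.2⟩,
    fun z => ⟨z.1.1, z.2⟩, fun _ => rfl, fun _ => rfl⟩, Iff.rfl⟩⟩

theorem treeHt_strictMono : StrictMono (treeHt hT) := fun c b h => by
  have := hT b
  rw [treeHt_eq_typein hT h]
  exact Ordinal.typein_lt_type _ _

theorem exists_lt_treeHt_eq {b : T} {ξ : Ordinal} (h : ξ < treeHt hT b) :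
    ∃ c < b, treeHt hT c = ξ := by
  have := hT b
  obtain ⟨c, hc⟩ := Ordinal.typein_surj (fun a b : {y : T // y < b} => (a : T) < (b : T)) h
  exact ⟨c.1, c.2, (treeHt_eq_typein hT c.2).trans hc⟩

theorem exists_le_treeHt_eq {b : T} {ξ : Ordinal} (h : ξ ≤ treeHt hT b) :
    ∃ c ≤ b, treeHt hT c = ξ := by
  rcases h.lt_or_eq with h | h
  · obtain ⟨c, hcb, hc⟩ := exists_lt_treeHt_eq hT h
    exact ⟨c, hcb.le, hc⟩
  · exact ⟨b, le_rfl, h.symm⟩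

theorem exists_covBy_treeHt_eq {b : T} {ξ : Ordinal} (h : treeHt hT b = Order.succ ξ) :
    ∃ c, c ⋖ b ∧ treeHt hT c = ξ := by
  obtain ⟨c, hcb, hc⟩ := exists_lt_treeHt_eq hT (h ▸ Order.lt_succ ξ)
  refine ⟨c, ⟨hcb, fun d hcd hdb => ?_⟩, hc⟩
  have hcd' := treeHt_strictMono hT hcd
  have hdb' := treeHt_strictMono hT hdb
  rw [hc] at hcd'
  rw [h, Order.lt_succ_iff] at hdb'
  exact hdb'.not_gt hcd'

end TreeOrder

namespace IsAdmissiblePartitionTree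

variable {K : Type} [LinearOrder K] [TopologicalSpace K] {T : Type} [PartialOrder T]
  {I : T → Set K} (hT : IsAdmissiblePartitionTree K T I)
include hT

theorem antitone {a b : T} (h : a ≤ b) : I b ⊆ I a := (hT.le_iff a b).mp h

theorem eq_of_I_eq {a b : T} (h : I a = I b) : a = b :=
  le_antisymm ((hT.le_iff a b).mpr h.ge) ((hT.le_iff b a).mpr h.le)

theorem exists_three_of_covBy {a b : T} (hab : a ⋖ b) :
    ∃ x y z : K, x ≠ y ∧ y ≠ z ∧ x ≠ z ∧ x ∈ I a ∧ y ∈ I a ∧ z ∈ I a := by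
  obtain ⟨x, y, hx, hy, hxy⟩ := hT.nontrivial a
  by_contra! h
  refine hT.two_elt a ⟨x, y, hxy, Subset.antisymm (fun z hz => ?_) (insert_subset hx
    (singleton_subset_iff.mpr hy))⟩ ⟨b, hab⟩
  by_contra! hz'
  simp only [mem_insert_iff, mem_singleton_iff, not_or] at hz'
  exact h x y z hxy (Ne.symm hz'.2) (Ne.symm hz'.1) hx hy hz

theorem inter_subsingleton_of_covBy {a b c : T} (hab : a ⋖ b) (hac : a ⋖ c) (hbc : b ≠ c) :
    (I b ∩ I c).Subsingleton := by
  obtain ⟨b₀, c₀, -, -, -, hchildren, -, y, -, -, -, -, -, hb₀, hc₀, -, -⟩ :=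
    hT.three_elt a (hT.exists_three_of_covBy hab)
  have hsplit : (I b₀ ∩ I c₀).Subsingleton := subsingleton_singleton.anti
    fun u hu => le_antisymm (hb₀.2 hu.1) (hc₀.2 hu.2)
  rcases hchildren b hab with rfl | rfl <;> rcases hchildren c hac with rfl | rfl
  · exact absurd rfl hbc
  · exact hsplit
  · exact inter_comm (I c) (I b) ▸ hsplit
  · exact absurd rfl hbc

theorem eq_of_treeHt_eq {a b : T} (hab : treeHt hT.tree a = treeHt hT.tree b)
    (hI : (I a ∩ I b).Nontrivial) : a = b := by
  induction hα : treeHt hT.tree a using WellFoundedLT.induction generalizing a b with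
  | _ α IH =>
  rcases Ordinal.zero_or_succ_or_isSuccLimit α with rfl | ⟨β, rfl⟩ | hlim
  · exact hT.eq_of_I_eq (((hT.root a).mp hα).trans ((hT.root b).mp (hab ▸ hα)).symm)
  · obtain ⟨p, hpa, hp⟩ := exists_covBy_treeHt_eq hT.tree hα
    obtain ⟨q, hqb, hq⟩ := exists_covBy_treeHt_eq hT.tree (hab ▸ hα)
    obtain rfl : p = q := IH β (Order.lt_succ β) (hp.trans hq.symm)
      (hI.mono (inter_subset_inter (hT.antitone hpa.le) (hT.antitone hqb.le))) hp
    by_contra hne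
    exact hI.not_subsingleton (hT.inter_subsingleton_of_covBy hpa hqb hne)
  · obtain ⟨g, hg, hIa⟩ := (hT.limit_level α hlim a).mp hα
    obtain ⟨g', hg', hIb⟩ := (hT.limit_level α hlim b).mp (hab ▸ hα)
    have hgg' : ∀ ξ < α, g ξ = g' ξ := fun ξ hξ =>
      IH ξ hξ ((hg ξ hξ).trans (hg' ξ hξ).symm) (hI.mono (inter_subset_inter
        (hIa ▸ biInter_subset_of_mem (mem_Iio.mpr hξ))
        (hIb ▸ biInter_subset_of_mem (mem_Iio.mpr hξ)))) (hg ξ hξ)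
    refine hT.eq_of_I_eq ?_
    rw [hIa, hIb]
    exact iInter₂_congr fun ξ hξ => by rw [hgg' ξ hξ]

theorem le_of_treeHt_le {a b : T} (hab : treeHt hT.tree a ≤ treeHt hT.tree b)
    (hI : (I a ∩ I b).Nontrivial) : a ≤ b := by
  obtain ⟨c, hcb, hc⟩ := exists_le_treeHt_eq hT.tree hab
  obtain rfl : a = c := hT.eq_of_treeHt_eq hc.symm
    (hI.mono (inter_subset_inter_right _ (hT.antitone hcb)))
  exact hcb

end IsAdmissiblePartitionTree

theorem stmt_13_general {K : Type} [LinearOrder K] [TopologicalSpace K]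
    {T : Type} [PartialOrder T] {I : T → Set K}
    (hT : IsAdmissiblePartitionTree K T I)
    (a b : T) (h : ∃ x y : K, x ≠ y ∧ x ∈ I a ∩ I b ∧ y ∈ I a ∩ I b) :
    a ≤ b ∨ b ≤ a := by
  obtain ⟨x, y, hxy, hx, hy⟩ := h
  have hI : (I a ∩ I b).Nontrivial := ⟨x, hx, y, hy, hxy⟩
  rcases le_total (treeHt hT.tree a) (treeHt hT.tree b) with hab | hba
  · exact Or.inl (hT.le_of_treeHt_le hab hI)
  · exact Or.inr (hT.le_of_treeHt_le hba (inter_comm (I a) (I b) ▸ hI))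

/-- If two members of an admissible partition tree meet in at least two points, then they
are comparable in the tree order. -/
theorem stmt_13 {K : Type} [LinearOrder K] [TopologicalSpace K] [OrderTopology K]
    [CompactSpace K] [Nontrivial K]
    {T : Type} [PartialOrder T] {I : T → Set K}
    (hT : IsAdmissiblePartitionTree K T I)
    (a b : T) (h : ∃ x y : K, x ≠ y ∧ x ∈ I a ∩ I b ∧ y ∈ I a ∩ I b) :
    a ≤ b ∨ b ≤ a :=
  stmt_13_general hT a b h
end
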